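/- Let A ⊆ B be an extension of commutative integral domains such that B is integral over A and A is integrally closed. Let q be a prime ideal of B and let p = q ∩ A. If the residue field κ(q) is generated by a single element as a field extension of κ(p), then κ(q) is a finite extension of κ(p) and [κ(q) : κ(p)] ≤ [K(B) : K(A)], an inequality of vector-space dimensions in which the right-hand side may be infinite. -/

import Mathlib

noncomputable section

open Ideal

universe u v

/-- The field embedding `K(A) →+* K(B)` between fraction fields induced by an injective ring
homomorphism between integral domains. -/
def RingHom.fracMap {A : Type u} {B : Type v} [CommRing A] [IsDomain A] [CommRing B]
    [IsDomain B] (f : A →+* B) (hf : Function.Injective f) :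
    FractionRing A →+* FractionRing B :=
  IsFractionRing.lift (g := (algebraMap B (FractionRing B)).comp f)
    ((IsFractionRing.injective B (FractionRing B)).comp hf)

/-- `[K(B) : K(A)]` as a cardinal, for an injective ring hom `f : A →+* B` of domains. -/
def fracRank {A : Type u} {B : Type v} [CommRing A] [IsDomain A] [CommRing B] [IsDomain B]
    (f : A →+* B) (hf : Function.Injective f) : Cardinal.{v} :=
  letI := (f.fracMap hf).toAlgebra
  Module.rank (FractionRing A) (FractionRing B)

/-- `[K(B) : K(A)]` as a natural number (zero if infinite). -/
def fracFinrank {A : Type u} {B : Type v} [CommRing A] [IsDomain A] [CommRing B] [IsDomain B]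
    (f : A →+* B) (hf : Function.Injective f) : ℕ :=
  letI := (f.fracMap hf).toAlgebra
  Module.finrank (FractionRing A) (FractionRing B)

/-- `K(B)/K(A)` is a finite extension. -/
def FracFinite {A : Type u} {B : Type v} [CommRing A] [IsDomain A] [CommRing B] [IsDomain B]
    (f : A →+* B) (hf : Function.Injective f) : Prop :=
  letI := (f.fracMap hf).toAlgebra
  Module.Finite (FractionRing A) (FractionRing B)

/-- The canonical embedding of residue fields `κ(p) →+* κ(q)` for a prime `q` of `B` lying
over `p = q ∩ A`, where `κ(q)` is the fraction field of `B ⧸ q`. -/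
def residueMap (A : Type u) {B : Type v} [CommRing A] [CommRing B] [Algebra A B]
    (q : Ideal B) (hq : q.IsPrime) :
    FractionRing (A ⧸ q.comap (algebraMap A B)) →+* FractionRing (B ⧸ q) :=
  haveI := hq
  (Ideal.quotientMap q (algebraMap A B) le_rfl).fracMap Ideal.quotientMap_injective

/-- The field-extension structure `κ(q)/κ(p)`. -/
def residueAlgebra (A : Type u) {B : Type v} [CommRing A] [CommRing B] [Algebra A B]
    (q : Ideal B) (hq : q.IsPrime) :
    Algebra (FractionRing (A ⧸ q.comap (algebraMap A B))) (FractionRing (B ⧸ q)) :=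
  (residueMap A q hq).toAlgebra

/-- The residue degree `[κ(q) : κ(p)]` as a cardinal. -/
def residueRank (A : Type u) {B : Type v} [CommRing A] [CommRing B] [Algebra A B]
    (q : Ideal B) (hq : q.IsPrime) : Cardinal.{v} :=
  haveI := hq
  letI := residueAlgebra A q hq
  Module.rank (FractionRing (A ⧸ q.comap (algebraMap A B))) (FractionRing (B ⧸ q))

/-- The residue degree `[κ(q) : κ(p)]` as a natural number (zero if infinite). -/
def residueFinrank (A : Type u) {B : Type v} [CommRing A] [CommRing B] [Algebra A B]
    (q : Ideal B) (hq : q.IsPrime) : ℕ :=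
  haveI := hq
  letI := residueAlgebra A q hq
  Module.finrank (FractionRing (A ⧸ q.comap (algebraMap A B))) (FractionRing (B ⧸ q))

/-- `κ(q)/κ(p)` is a finite extension. -/
def ResidueFinite (A : Type u) {B : Type v} [CommRing A] [CommRing B] [Algebra A B]
    (q : Ideal B) (hq : q.IsPrime) : Prop :=
  haveI := hq
  letI := residueAlgebra A q hq
  Module.Finite (FractionRing (A ⧸ q.comap (algebraMap A B))) (FractionRing (B ⧸ q))

/-- A commutative ring is a regular local ring if it is a Noetherian local ring in which the
minimal number of generators of the maximal ideal equals the Krull dimension. -/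
def IsRegularLocal (R : Type u) [CommRing R] : Prop :=
  IsNoetherianRing R ∧ ∃ h : IsLocalRing R,
    (↑(sInf {n : ℕ | ∃ s : Finset R, s.card = n ∧
        Ideal.span (s : Set R) = @IsLocalRing.maximalIdeal R _ h}) : WithBot ℕ∞) = ringKrullDim R

/-!
Since `B ⧸ q` is integral over `A ⧸ p`, the extension `κ(q)/κ(p)` is algebraic, so a primitive
element makes it finite with only finitely many intermediate fields. A generator can then be
taken in `B ⧸ q`: if `A ⧸ p` is finite, `B ⧸ q` is already the field `κ(q)`; otherwise take a
maximal field of the form `κ(p)⟮r⟯` with `r ∈ B ⧸ q`; for `y ∈ B ⧸ q`, two of the infinitely many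
fields `κ(p)⟮a • r + y⟯` (`a ∈ A ⧸ p`) coincide, and that field contains `r` and `y`, so by
maximality `y ∈ κ(p)⟮r⟯`. Lifting the generator to `b ∈ B`, the reduction of `minpoly A b` kills
it, so `[κ(q) : κ(p)] ≤ deg (minpoly A b)`. As `A` is integrally closed, `minpoly A b` is also
the minimal polynomial of `b` over `K(A)`, so its degree is `[K(A)(b) : K(A)] ≤ [K(B) : K(A)]`.
-/

open IntermediateField Polynomial

theorem RingHom.fracMap_algebraMap {A B : Type*} [CommRing A] [IsDomain A] [CommRing B]
    [IsDomain B] (f : A →+* B) (hf : Function.Injective f) (x : A) :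
    f.fracMap hf (algebraMap A (FractionRing A) x) = algebraMap B (FractionRing B) (f x) :=
  IsFractionRing.lift_algebraMap _ x

theorem isScalarTower_fracMap (A B : Type*) [CommRing A] [IsDomain A] [CommRing B] [IsDomain B]
    [Algebra A B] (h : Function.Injective (algebraMap A B)) :
    letI := ((algebraMap A B).fracMap h).toAlgebra
    IsScalarTower A (FractionRing A) (FractionRing B) :=
  letI := ((algebraMap A B).fracMap h).toAlgebra
  .of_algebraMap_eq fun x => by
    rw [IsScalarTower.algebraMap_apply A B (FractionRing B)]
    exact (RingHom.fracMap_algebraMap _ h x).symm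

theorem IsFractionRing.algebraMap_surjective_of_finite (R L : Type*) [CommRing R] [IsDomain R]
    [Field L] [Algebra R L] [IsFractionRing R L] [Finite R] :
    Function.Surjective (algebraMap R L) :=
  (IsFractionRing.surjective_iff_isField (R := R) (K := L)).mpr (Finite.isField_of_domain R)

section PrimitiveElement

variable {A₀ R K L : Type*} [CommRing A₀] [CommRing R] [Field K] [Field L]
  [Algebra A₀ K] [Algebra K L] [Algebra A₀ L] [IsScalarTower A₀ K L]
  [Algebra A₀ R] [Algebra R L] [IsScalarTower A₀ R L]

theorem exists_mem_adjoin_simple_smul_add [Infinite A₀] [Finite (IntermediateField K L)]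
    (hA₀ : Function.Injective (algebraMap A₀ K)) (α β : L) :
    ∃ a : A₀, α ∈ K⟮a • α + β⟯ ∧ β ∈ K⟮a • α + β⟯ := by
  obtain ⟨a₁, a₂, heq, hne⟩ := Function.not_injective_iff.mp
    fun h : Function.Injective fun a : A₀ => K⟮a • α + β⟯ =>
      Infinite.not_finite (Finite.of_injective _ h)
  refine ⟨a₁, ?_⟩
  set M := K⟮a₁ • α + β⟯
  have h₁ : a₁ • α + β ∈ M := mem_adjoin_simple_self K _
  have h₂ : a₂ • α + β ∈ M := heq ▸ mem_adjoin_simple_self K _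
  have hc : algebraMap A₀ K (a₁ - a₂) ≠ 0 := by
    rw [map_sub, sub_ne_zero]
    exact hA₀.ne hne
  have hα : α ∈ M := by
    have hdiff : algebraMap A₀ K (a₁ - a₂) • α ∈ M := by
      rw [algebraMap_smul, sub_smul]
      simpa using sub_mem h₁ h₂
    have := M.smul_mem hdiff (x := (algebraMap A₀ K (a₁ - a₂))⁻¹)
    rwa [inv_smul_smul₀ hc] at this
  have hβ : β ∈ M := by
    simpa [algebraMap_smul] using sub_mem h₁ (M.smul_mem hα (x := algebraMap A₀ K a₁))
  exact ⟨hα, hβ⟩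

theorem exists_forall_algebraMap_mem_adjoin_simple [Infinite A₀] [Finite (IntermediateField K L)]
    (hA₀ : Function.Injective (algebraMap A₀ K)) :
    ∃ r : R, ∀ y : R, algebraMap R L y ∈ K⟮algebraMap R L r⟯ := by
  obtain ⟨_, ⟨r, rfl⟩, hmax⟩ :=
    (Set.toFinite (Set.range fun r : R => K⟮algebraMap R L r⟯)).exists_maximal ⟨_, 0, rfl⟩
  refine ⟨r, fun y => ?_⟩
  obtain ⟨a, hr, hy⟩ :=
    exists_mem_adjoin_simple_smul_add hA₀ (algebraMap R L r) (algebraMap R L y)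
  have hlift : a • algebraMap R L r + algebraMap R L y = algebraMap R L (a • r + y) := by
    rw [map_add, Algebra.smul_def, Algebra.smul_def, map_mul, ← IsScalarTower.algebraMap_apply]
  rw [hlift] at hr hy
  exact hmax ⟨a • r + y, rfl⟩ (adjoin_simple_le_iff.mpr hr) hy

variable [IsDomain A₀] [IsFractionRing A₀ K] [IsDomain R] [IsFractionRing R L]

theorem exists_algebraMap_adjoin_simple_eq_top [Algebra.IsIntegral A₀ R]
    (h : ∃ x : L, K⟮x⟯ = ⊤) : ∃ r : R, K⟮algebraMap R L r⟯ = ⊤ := by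
  have := isAlgebraic_of_isFractionRing (R := A₀) (S := R) K L
  have := Field.finite_intermediateField_of_exists_primitive_element K L h
  rcases finite_or_infinite A₀ with hA₀ | hA₀
  · have : Finite K := .of_surjective _ (IsFractionRing.algebraMap_surjective_of_finite A₀ K)
    have : FiniteDimensional K L := Field.FiniteDimensional.of_exists_primitive_element K L h
    have : Finite L := Module.finite_of_finite K
    have : Finite R := .of_injective _ (IsFractionRing.injective R L)
    obtain ⟨x, hx⟩ := h
    obtain ⟨r, rfl⟩ := IsFractionRing.algebraMap_surjective_of_finite R L x
    exact ⟨r, hx⟩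
  · obtain ⟨r, hr⟩ := exists_forall_algebraMap_mem_adjoin_simple (R := R) (L := L)
      (IsFractionRing.injective A₀ K)
    refine ⟨r, eq_top_iff.mpr fun z _ => ?_⟩
    obtain ⟨a, b, -, rfl⟩ := IsFractionRing.div_surjective (A := R) z
    exact div_mem (hr a) (hr b)

end PrimitiveElement

theorem finrank_le_natDegree_of_adjoin_simple_eq_top {A K L : Type*} [CommRing A] [Field K]
    [Field L] [Algebra A K] [Algebra K L] [Algebra A L] [IsScalarTower A K L] {x : L}
    (hx : K⟮x⟯ = ⊤) {p : A[X]} (hp : p.Monic) (hpx : aeval x p = 0) :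
    Module.finrank K L ≤ p.natDegree := by
  have hpx' : aeval x (p.map (algebraMap A K)) = 0 := by rwa [aeval_map_algebraMap]
  calc Module.finrank K L = Module.finrank K K⟮x⟯ := by rw [hx, finrank_top']
    _ = (minpoly K x).natDegree := adjoin.finrank ⟨_, hp.map _, hpx'⟩
    _ ≤ (p.map (algebraMap A K)).natDegree :=
      natDegree_le_natDegree (minpoly.min K x (hp.map _) hpx')
    _ = p.natDegree := hp.natDegree_map _

theorem natDegree_minpoly_le_rank {A S : Type*} [CommRing A] [IsDomain A] [IsIntegrallyClosed A]
    [CommRing S] [IsDomain S] [Algebra A S] (K L : Type*) [Field K] [Field L] [Algebra A K]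
    [IsFractionRing A K] [Algebra S L] [Algebra K L] [Algebra A L] [IsScalarTower A K L]
    [IsScalarTower A S L] {s : S} (hs : IsIntegral A s) :
    ((minpoly A s).natDegree : Cardinal) ≤ Module.rank K L := by
  set x := algebraMap S L s
  have hx : IsIntegral K x := (hs.map (IsScalarTower.toAlgHom A S L)).tower_top
  have : FiniteDimensional K K⟮x⟯ := adjoin.finiteDimensional hx
  calc ((minpoly A s).natDegree : Cardinal) = Module.finrank K K⟮x⟯ := by
        rw [adjoin.finrank hx, minpoly.isIntegrallyClosed_eq_field_fractions K L hs,
          (minpoly.monic hs).natDegree_map]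
    _ = Module.rank K K⟮x⟯ := Module.finrank_eq_rank _ _
    _ ≤ Module.rank K L := Submodule.rank_le (Subalgebra.toSubmodule K⟮x⟯.toSubalgebra)

/-- Let `A ⊆ B` be an extension of integral domains with `B` integral over `A`
and `A` integrally closed.  Let `q` be a prime of `B` and `p = q ∩ A`.  If the residue field
`κ(q)` is generated by a single element as a field extension of `κ(p)`, then `κ(q)/κ(p)` is
finite and `[κ(q) : κ(p)] ≤ [K(B) : K(A)]` (an inequality of cardinal ranks; the right-hand
side may be infinite). -/
theorem residue_degree_le_of_adjoin_singleton
    (A : Type u) (B : Type v) [CommRing A] [IsDomain A] [CommRing B] [IsDomain B]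
    [Algebra A B] (hAB : Function.Injective (algebraMap A B))
    [Algebra.IsIntegral A B] [IsIntegrallyClosed A]
    (q : Ideal B) (hq : q.IsPrime)
    (hmono : haveI := hq; letI := residueAlgebra A q hq;
      ∃ x : FractionRing (B ⧸ q),
        IntermediateField.adjoin (FractionRing (A ⧸ q.comap (algebraMap A B))) {x} = ⊤) :
    ResidueFinite A q hq ∧
      residueRank A q hq ≤ fracRank (algebraMap A B) hAB := by
  have := hq
  let := residueAlgebra A q hq
  have : IsScalarTower (A ⧸ q.comap (algebraMap A B))
      (FractionRing (A ⧸ q.comap (algebraMap A B))) (FractionRing (B ⧸ q)) :=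
    isScalarTower_fracMap _ _ quotientMap_injective
  have := IsScalarTower.to₁₃₄ A (A ⧸ q.comap (algebraMap A B))
    (FractionRing (A ⧸ q.comap (algebraMap A B))) (FractionRing (B ⧸ q))
  have := isAlgebraic_of_isFractionRing (R := A ⧸ q.comap (algebraMap A B)) (S := B ⧸ q)
    (FractionRing (A ⧸ q.comap (algebraMap A B))) (FractionRing (B ⧸ q))
  have hfin := Field.FiniteDimensional.of_exists_primitive_element _ _ hmono
  obtain ⟨r, hr⟩ := exists_algebraMap_adjoin_simple_eq_top
    (A₀ := A ⧸ q.comap (algebraMap A B)) (R := B ⧸ q) hmono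
  obtain ⟨b, rfl⟩ := Ideal.Quotient.mk_surjective r
  have hb : IsIntegral A b := Algebra.IsIntegral.isIntegral b
  have hroot : aeval (algebraMap (B ⧸ q) (FractionRing (B ⧸ q)) (Ideal.Quotient.mk q b))
      (minpoly A b) = 0 := by
    rw [aeval_algebraMap_apply, ← Ideal.Quotient.algebraMap_eq, aeval_algebraMap_apply,
      minpoly.aeval, map_zero, map_zero]
  let := ((algebraMap A B).fracMap hAB).toAlgebra
  have : IsScalarTower A (FractionRing A) (FractionRing B) := isScalarTower_fracMap A B hAB
  refine ⟨hfin, ?_⟩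
  calc residueRank A q hq = Module.finrank (FractionRing (A ⧸ q.comap (algebraMap A B)))
        (FractionRing (B ⧸ q)) := (Module.finrank_eq_rank _ _).symm
    _ ≤ (minpoly A b).natDegree :=
      Nat.cast_le.mpr (finrank_le_natDegree_of_adjoin_simple_eq_top hr (minpoly.monic hb) hroot)
    _ ≤ fracRank (algebraMap A B) hAB := natDegree_minpoly_le_rank _ _ hb

end
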